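/- Let A and B be d×d real symmetric positive semidefinite matrices. Then ‖A^{1/2} − B^{1/2}‖_op ≤ ‖A − B‖_op^{1/2}. -/

import Mathlib

open Matrix
open scoped Classical

/-- The operator (spectral) norm of a real matrix, i.e. the operator norm of the induced
linear map between Euclidean spaces. -/
noncomputable def opNorm {m n : ℕ} (A : Matrix (Fin m) (Fin n) ℝ) : ℝ :=
  ‖LinearMap.toContinuousLinearMap (Matrix.toEuclideanLin A)‖

/-- The unique positive semidefinite square root of a positive semidefinite real matrix
(junk value `0` if the matrix is not positive semidefinite). -/
noncomputable def psdSqrt {d : ℕ} (A : Matrix (Fin d) (Fin d) ℝ) : Matrix (Fin d) (Fin d) ℝ :=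
  if h : A.PosSemidef then
    (h.1.eigenvectorUnitary.1 * diagonal ((↑) ∘ (√·) ∘ h.1.eigenvalues) *
      (star h.1.eigenvectorUnitary : Matrix (Fin d) (Fin d) ℝ))
  else 0

/-!
If `(S - R) v = μ • v` for positive operators `S, R` and `v ≠ 0`, then
`re ⟪(S * S - R * R) v, v⟫ = μ (re ⟪v, S v⟫ + re ⟪v, R v⟫)`, while
`|μ| ‖v‖² = |re ⟪v, S v⟫ - re ⟪v, R v⟫| ≤ re ⟪v, S v⟫ + re ⟪v, R v⟫` by positivity;
together these give `μ² ≤ ‖S * S - R * R‖`. As `S - R` is self-adjoint, its norm is its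
spectral radius, and in finite dimensions every spectral value is an eigenvalue. Take
`S = √A`, `R = √B` acting on Euclidean space.
-/

open RCLike

namespace ContinuousLinearMap

variable {𝕜 E : Type*} [RCLike 𝕜] [NormedAddCommGroup E] [InnerProductSpace 𝕜 E]

local notation "⟪" x ", " y "⟫" => inner 𝕜 x y

theorem abs_re_inner_apply_self_le (T : E →L[𝕜] E) (x : E) :
    |re ⟪T x, x⟫| ≤ ‖T‖ * ‖x‖ ^ 2 :=
  calc |re ⟪T x, x⟫| ≤ ‖T x‖ * ‖x‖ := (abs_re_le_norm _).trans (norm_inner_le_norm _ _)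
    _ ≤ ‖T‖ * ‖x‖ * ‖x‖ := by gcongr; exact T.le_opNorm x
    _ = ‖T‖ * ‖x‖ ^ 2 := by ring

theorem sq_le_norm_mul_self_sub_mul_self_of_sub_apply_eq_smul {S R : E →L[𝕜] E}
    (hS : S.IsPositive) (hR : R.IsPositive) {v : E} (hv : v ≠ 0) {μ : ℝ}
    (hμ : (S - R) v = (μ : 𝕜) • v) : μ ^ 2 ≤ ‖S * S - R * R‖ := by
  set p := re ⟪v, S v⟫
  set q := re ⟪v, R v⟫
  have hn : 0 < ‖v‖ ^ 2 := by positivity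
  have hpq : μ * ‖v‖ ^ 2 = p - q := by
    have := congrArg re (congrArg (⟪·, v⟫) hμ)
    rw [_root_.sub_apply, inner_sub_left, inner_smul_real_left, map_sub, smul_re,
      inner_self_eq_norm_sq, inner_re_symm, inner_re_symm (R v)] at this
    exact this.symm
  have hquad : re ⟪(S * S - R * R) v, v⟫ = μ * (p + q) := by
    have hsplit : re ⟪(S * S - R * R) v, v⟫ = re ⟪(S - R) v, S v⟫ + re ⟪(S - R) v, R v⟫ := by
      simp only [_root_.sub_apply, mul_apply_eq_comp, inner_sub_left,
        map_sub, hS.inner_left_eq_inner_right (S v), hR.inner_left_eq_inner_right (R v),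
        inner_re_symm (R v) (S v)]
      ring
    rw [hsplit, hμ, inner_smul_real_left, inner_smul_real_left, smul_re, smul_re]
    ring
  have habs : |μ| * ‖v‖ ^ 2 ≤ p + q := by
    rw [← abs_of_pos hn, ← abs_mul, hpq, abs_sub_le_iff]
    constructor <;> linarith [hS.re_inner_nonneg_right v, hR.re_inner_nonneg_right v]
  refine le_of_mul_le_mul_right ?_ hn
  calc μ ^ 2 * ‖v‖ ^ 2 = |μ| * (|μ| * ‖v‖ ^ 2) := by
        rw [← mul_assoc, ← abs_mul, abs_mul_self, sq]
    _ ≤ |μ| * (p + q) := by gcongr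
    _ = |re ⟪(S * S - R * R) v, v⟫| := by
      rw [hquad, abs_mul, abs_of_nonneg ((mul_nonneg (abs_nonneg μ) hn.le).trans habs)]
    _ ≤ ‖S * S - R * R‖ * ‖v‖ ^ 2 := abs_re_inner_apply_self_le _ _

theorem norm_le_of_forall_mem_spectrum_norm_le [CompleteSpace E] {T : E →L[𝕜] E}
    (hT : IsSelfAdjoint T) {r : ℝ} (hr : 0 ≤ r) (h : ∀ μ ∈ spectrum 𝕜 T, ‖μ‖ ≤ r) :
    ‖T‖ ≤ r := by
  have : ‖T‖₊ ≤ r.toNNReal := by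
    rw [← ENNReal.coe_le_coe, ← T.spectralRadius_eq_nnnorm hT]
    exact iSup₂_le fun μ hμ =>
      ENNReal.coe_le_coe.2 ((Real.le_toNNReal_iff_coe_le hr).2 (h μ hμ))
  exact (Real.le_toNNReal_iff_coe_le hr).1 this

theorem norm_sub_le_sqrt_norm_mul_self_sub_mul_self [FiniteDimensional 𝕜 E] {S R : E →L[𝕜] E}
    (hS : S.IsPositive) (hR : R.IsPositive) : ‖S - R‖ ≤ √‖S * S - R * R‖ := by
  have := FiniteDimensional.complete 𝕜 E
  have hSR : IsSelfAdjoint (S - R) := hS.isSelfAdjoint.sub hR.isSelfAdjoint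
  refine norm_le_of_forall_mem_spectrum_norm_le hSR (Real.sqrt_nonneg _) fun μ hμ => ?_
  rw [spectrum_eq, ← Module.End.hasEigenvalue_iff_mem_spectrum] at hμ
  have hμ_real : (re μ : 𝕜) = μ := conj_eq_iff_re.1 (hSR.isSymmetric.conj_eigenvalue_eq_self hμ)
  obtain ⟨v, hv⟩ := hμ.exists_hasEigenvector
  have := sq_le_norm_mul_self_sub_mul_self_of_sub_apply_eq_smul hS hR hv.2 (μ := re μ)
    (by rw [hμ_real]; exact hv.apply_eq_smul)
  rw [← hμ_real, norm_ofReal]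
  exact Real.abs_le_sqrt this

end ContinuousLinearMap

open scoped MatrixOrder ComplexOrder

theorem Matrix.PosSemidef.isPositive_toEuclideanCLM {n 𝕜 : Type*} [Fintype n] [DecidableEq n]
    [RCLike 𝕜] {A : Matrix n n 𝕜} (hA : A.PosSemidef) :
    (toEuclideanCLM (n := n) (𝕜 := 𝕜) A).IsPositive :=
  (LinearMap.isPositive_toContinuousLinearMap_iff _).2 (isPositive_toEuclideanLin_iff.2 hA)

theorem opNorm_eq_norm_toEuclideanCLM {d : ℕ} (A : Matrix (Fin d) (Fin d) ℝ) :
    opNorm A = ‖toEuclideanCLM (n := Fin d) (𝕜 := ℝ) A‖ :=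
  rfl

theorem psdSqrt_eq_sqrt {d : ℕ} {A : Matrix (Fin d) (Fin d) ℝ} (hA : A.PosSemidef) :
    psdSqrt A = CFC.sqrt A := by
  rw [psdSqrt, dif_pos hA, CFC.sqrt_eq_real_sqrt A hA.nonneg, cfcₙ_eq_cfc, hA.1.cfc_eq]
  rfl

/-- **Hölder-1/2 continuity of the matrix square root in operator norm:**
for positive semidefinite `A, B`, `‖A^{1/2} - B^{1/2}‖_op ≤ ‖A - B‖_op^{1/2}`. -/
theorem opNorm_psdSqrt_sub_psdSqrt_le
    {d : ℕ} (A B : Matrix (Fin d) (Fin d) ℝ)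
    (hA : A.PosSemidef) (hB : B.PosSemidef) :
    opNorm (psdSqrt A - psdSqrt B) ≤ Real.sqrt (opNorm (A - B)) := by
  have key := ContinuousLinearMap.norm_sub_le_sqrt_norm_mul_self_sub_mul_self
    (nonneg_iff_posSemidef.1 (CFC.sqrt_nonneg A)).isPositive_toEuclideanCLM
    (nonneg_iff_posSemidef.1 (CFC.sqrt_nonneg B)).isPositive_toEuclideanCLM
  rw [← map_mul, ← map_mul, ← map_sub, ← map_sub, CFC.sqrt_mul_sqrt_self A hA.nonneg,
    CFC.sqrt_mul_sqrt_self B hB.nonneg] at key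
  rwa [psdSqrt_eq_sqrt hA, psdSqrt_eq_sqrt hB, opNorm_eq_norm_toEuclideanCLM,
    opNorm_eq_norm_toEuclideanCLM]
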